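/- For positive integers m and nonnegative integers k, let c_{m,k} be defined by c_{m,0} = 1, c_{m,k} = Σ_{1 ≤ i_1 < i_2 < ⋯ < i_k ≤ m−1} i_1² i_2² ⋯ i_k² for 1 ≤ k ≤ m−1 (the k-th elementary symmetric polynomial of 1², 2², …, (m−1)²), and c_{m,k} = 0 for k ≥ m. Define real polynomials q_m by q_0 = Γ(1/2) = √π and the recurrence q_m(t) = (m − 1/2 − (m−1)² t) q_{m−1}(t) − t q'_{m−1}(t) for m ≥ 1. Then for every m ≥ 1, q_m(t) = Σ_{k=0}^{m−1} (−1)^k Γ(m − k + 1/2) c_{m,k} t^k. -/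

import Mathlib

/-!
The recurrence is the evaluation of the polynomial recurrence
`Q_{m+1} = (m + 1/2 - m² X) Q_m - X Q_m'`, which on coefficients reads
`a_{m+1,k+1} = (m - k - 1/2) a_{m,k+1} - m² a_{m,k}`. The claimed coefficients
`a_{m,k} = (-1)^k Γ(m - k + 1/2) c_{m,k}` satisfy it by `Γ(s + 1) = s Γ(s)` and the Pascal rule
`c_{m+1,k+1} = c_{m,k+1} + m² c_{m,k}` for elementary symmetric polynomials. The formula also
holds for `m = 0` (where `c_{0,0} = 1`), so the induction starts there; for `m ≥ 1` the
coefficients vanish from degree `m` on.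
-/

open Real Finset

/-- `c m k` is the `k`-th elementary symmetric polynomial of `1², 2², …, (m-1)²`:
`c m 0 = 1`, `c m k = Σ_{1 ≤ i₁ < ⋯ < i_k ≤ m-1} i₁²⋯i_k²` for `1 ≤ k ≤ m-1`, and
`c m k = 0` for `k ≥ m`. -/
noncomputable def c (m k : ℕ) : ℝ :=
  ∑ A ∈ (Finset.Icc 1 (m - 1)).powersetCard k, ∏ i ∈ A, (i : ℝ) ^ 2

open Polynomial

theorem Multiset.esymm_cons_succ {R : Type*} [CommSemiring R] (a : R) (s : Multiset R) (k : ℕ) :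
    (a ::ₘ s).esymm (k + 1) = s.esymm (k + 1) + a * s.esymm k := by
  simp only [Multiset.esymm, Multiset.powersetCard_cons, Multiset.map_add, Multiset.sum_add,
    Multiset.map_map, Function.comp_def, Multiset.prod_cons, Multiset.sum_map_mul_left]

lemma c_eq_esymm (m k : ℕ) :
    c m k = ((Finset.Icc 1 (m - 1)).val.map fun i : ℕ => (i : ℝ) ^ 2).esymm k :=
  (Finset.esymm_map_val _ _ _).symm

lemma c_zero_right (m : ℕ) : c m 0 = 1 := by simp [c]

lemma c_eq_zero_of_pred_lt {m k : ℕ} (h : m - 1 < k) : c m k = 0 := by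
  rw [c, Finset.powersetCard_eq_empty.2 (by simpa using h), Finset.sum_empty]

lemma c_succ_succ (m k : ℕ) : c (m + 1) (k + 1) = c m (k + 1) + (m : ℝ) ^ 2 * c m k := by
  rcases m with _ | n
  · simp [c]
  · rw [c_eq_esymm, c_eq_esymm, c_eq_esymm, Nat.add_sub_cancel, Nat.add_sub_cancel,
      ← Finset.insert_Icc_right_eq_Icc_add_one (by omega), Finset.insert_val_of_notMem (by simp),
      Multiset.map_cons, Multiset.esymm_cons_succ]

lemma Real.Gamma_int_add_half_add_one (n : ℤ) :
    Gamma (n + 1 / 2 + 1) = (n + 1 / 2) * Gamma (n + 1 / 2) := by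
  refine Gamma_add_one fun h => ?_
  have : ((2 * n + 1 : ℤ) : ℝ) = 0 := by push_cast; linarith
  have : 2 * n + 1 = 0 := by exact_mod_cast this
  omega

noncomputable def diagCoeff (m k : ℕ) : ℝ :=
  (-1) ^ k * Gamma ((m : ℝ) - (k : ℝ) + 1 / 2) * c m k

lemma diagCoeff_succ_zero (m : ℕ) : diagCoeff (m + 1) 0 = ((m : ℝ) + 1 / 2) * diagCoeff m 0 := by
  have h := Gamma_int_add_half_add_one m
  push_cast at h
  simp only [diagCoeff, c_zero_right, Nat.cast_zero, sub_zero, pow_zero, one_mul, mul_one,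
    Nat.cast_succ, add_right_comm _ (1 : ℝ), h]

lemma diagCoeff_succ_succ (m k : ℕ) :
    diagCoeff (m + 1) (k + 1) =
      ((m : ℝ) - k - 1 / 2) * diagCoeff m (k + 1) - (m : ℝ) ^ 2 * diagCoeff m k := by
  have h := Gamma_int_add_half_add_one (m - (k + 1))
  push_cast at h
  simp only [diagCoeff, c_succ_succ]
  push_cast
  rw [show (m : ℝ) + 1 - (k + 1) + 1 / 2 = m - (k + 1) + 1 / 2 + 1 by ring, h,
    show (m : ℝ) - k + 1 / 2 = m - (k + 1) + 1 / 2 + 1 by ring, h]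
  ring

noncomputable def diagPoly : ℕ → ℝ[X]
  | 0 => C (Gamma (1 / 2))
  | m + 1 => (C ((m : ℝ) + 1 / 2) - C ((m : ℝ) ^ 2) * X) * diagPoly m - X * derivative (diagPoly m)

lemma coeff_diagPoly (m k : ℕ) : (diagPoly m).coeff k = diagCoeff m k := by
  induction m generalizing k with
  | zero =>
    rcases k with _ | k
    · simp [diagPoly, diagCoeff, c_zero_right]
    · simp [diagPoly, diagCoeff, c_eq_zero_of_pred_lt (m := 0) k.succ_pos]
  | succ m ih =>
    have hpoly : ∀ k, (diagPoly (m + 1)).coeff k = ((m : ℝ) + 1 / 2) * (diagPoly m).coeff k -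
        (m : ℝ) ^ 2 * (X * diagPoly m).coeff k - (X * derivative (diagPoly m)).coeff k := by
      simp only [diagPoly, sub_mul, mul_assoc, coeff_sub, coeff_C_mul, implies_true]
    rcases k with _ | k
    · simp only [hpoly, coeff_X_mul_zero, ih, diagCoeff_succ_zero]
      ring
    · simp only [hpoly, coeff_X_mul, coeff_derivative, ih, diagCoeff_succ_succ]
      ring

lemma natDegree_diagPoly_le (m : ℕ) : (diagPoly m).natDegree ≤ m - 1 :=
  natDegree_le_iff_coeff_eq_zero.2 fun k hk => by
    rw [coeff_diagPoly, diagCoeff, c_eq_zero_of_pred_lt hk, mul_zero]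

lemma eq_eval_diagPoly (q : ℕ → ℝ → ℝ)
    (hq0 : ∀ t : ℝ, q 0 t = Real.Gamma (1 / 2))
    (hqrec : ∀ m : ℕ, 1 ≤ m → ∀ t : ℝ,
      q m t = ((m : ℝ) - 1 / 2 - ((m : ℝ) - 1) ^ 2 * t) * q (m - 1) t -
        t * deriv (q (m - 1)) t) (m : ℕ) :
    q m = fun t => (diagPoly m).eval t := by
  induction m with
  | zero => exact funext fun t => by simp [diagPoly, hq0]
  | succ m ih =>
    funext t
    rw [hqrec (m + 1) (by omega), Nat.add_sub_cancel, ih, Polynomial.deriv]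
    simp only [diagPoly, eval_sub, eval_mul, eval_C, eval_X]
    push_cast
    ring

/-- The polynomials defined by `q₀ = Γ(1/2)` and the recurrence
`q_m(t) = (m - 1/2 - (m-1)² t) q_{m-1}(t) - t q'_{m-1}(t)` satisfy
`q_m(t) = Σ_{k=0}^{m-1} (-1)^k Γ(m-k+1/2) c_{m,k} t^k` for every `m ≥ 1`. -/
theorem spherical_diagonal_polynomials (q : ℕ → ℝ → ℝ)
    (hq0 : ∀ t : ℝ, q 0 t = Real.Gamma (1 / 2))
    (hqrec : ∀ m : ℕ, 1 ≤ m → ∀ t : ℝ,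
      q m t = ((m : ℝ) - 1 / 2 - ((m : ℝ) - 1) ^ 2 * t) * q (m - 1) t -
        t * deriv (q (m - 1)) t) :
    ∀ m : ℕ, 1 ≤ m → ∀ t : ℝ,
      q m t = ∑ k ∈ Finset.range m,
        (-1 : ℝ) ^ k * Real.Gamma ((m : ℝ) - (k : ℝ) + 1 / 2) * c m k * t ^ k := by
  intro m hm t
  rw [congrFun (eq_eval_diagPoly q hq0 hqrec m) t,
    eval_eq_sum_range' ((natDegree_diagPoly_le m).trans_lt (Nat.sub_lt hm one_pos))]
  simp only [coeff_diagPoly, diagCoeff]
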